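/- arXiv:2502.00269 — 6 statements merged into one kernel-verified Lean document; each statement's English description precedes it below -/
import Mathlib

section
/- For integers 1 ≤ m ≤ n, the number of (m,n)-parking functions equals (n-m+1)·(n+1)^{m-1}. That is, the number of tuples α = (a_1,…,a_m) ∈ {1,…,n}^m whose nondecreasing rearrangement (b_1,…,b_m) satisfies b_i ≤ n-m+i for all i ∈ {1,…,m} is exactly (n-m+1)·(n+1)^{m-1}. -/
/-!
Pollak's circle argument. Add a spot to close the street into a circle of `n + 1` spots and
rotate preference sequences `g : Fin m → ZMod (n + 1)` by `s : ZMod (n + 1)`. For every `g`,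
exactly `n + 1 - m` rotations `g - s` are `(m, n)`-parking functions: in terms of the walk
`x ↦ #{cars preferring a spot < x} - x` on the unrolled circle, which goes down by at most one
per step and by `n + 1 - m` per turn, the good rotations are the new record minima within one
turn (the cycle lemma). As `(a, s) ↦ (a + s, s)` identifies parking functions times rotations
with the good pairs `(g, s)`, the count times `n + 1` is `(n + 1) ^ m * (n + 1 - m)`.
-/

open Finset

namespace ParkingFunction

section CycleLemma

variable (f : ℕ → ℤ)

def prefixMin (x : ℕ) : ℤ := (range (x + 1)).inf' nonempty_range_add_one f

lemma lt_prefixMin_iff {a : ℤ} {x : ℕ} : a < prefixMin f x ↔ ∀ y ≤ x, a < f y := by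
  simp only [prefixMin, lt_inf'_iff, mem_range, Nat.lt_succ_iff]

lemma prefixMin_le {x y : ℕ} (h : y ≤ x) : prefixMin f x ≤ f y :=
  inf'_le f (mem_range.2 (Nat.lt_succ_of_le h))

lemma exists_prefixMin_eq (x : ℕ) : ∃ y ≤ x, prefixMin f x = f y := by
  obtain ⟨y, hy, hfy⟩ := exists_mem_eq_inf' nonempty_range_add_one f
  exact ⟨y, Nat.lt_succ_iff.1 (mem_range.1 hy), hfy⟩

lemma prefixMin_succ (x : ℕ) : prefixMin f (x + 1) = min (f (x + 1)) (prefixMin f x) := by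
  simp only [prefixMin, range_add_one (n := x + 1)]
  exact inf'_insert _ f

variable {f}

lemma prefixMin_sub_prefixMin_succ (hstep : ∀ x, f x - 1 ≤ f (x + 1)) (x : ℕ) :
    prefixMin f x - prefixMin f (x + 1) = if f (x + 1) < prefixMin f x then 1 else 0 := by
  have := hstep x
  have := prefixMin_le f le_rfl (x := x)
  rw [prefixMin_succ]
  split_ifs <;> omega

lemma prefixMin_add_period {n k : ℕ} (hper : ∀ x, f (x + (n + 1)) = f x - k) :
    prefixMin f (n + (n + 1)) = prefixMin f n - k := by
  refine le_antisymm ?_ ?_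
  · obtain ⟨y, hy, hfy⟩ := exists_prefixMin_eq f n
    rw [hfy, ← hper]
    exact prefixMin_le f (by omega)
  · obtain ⟨y, hy, hfy⟩ := exists_prefixMin_eq f (n + (n + 1))
    rw [hfy]
    rcases le_or_gt y n with hyn | hyn
    · have := prefixMin_le f hyn
      omega
    · obtain ⟨x, rfl⟩ : ∃ x, y = x + (n + 1) := ⟨y - (n + 1), by omega⟩
      rw [hper]
      have := prefixMin_le f (show x ≤ n by omega)
      omega

lemma forall_lt_shift_iff_lt_prefixMin {n k : ℕ} (hper : ∀ x, f (x + (n + 1)) = f x - k)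
    {s : ℕ} (hs : s ≤ n) :
    (∀ t ≤ n, f (s + (n + 1)) < f (s + t)) ↔ f (s + n + 1) < prefixMin f (s + n) := by
  rw [lt_prefixMin_iff, add_assoc]
  refine ⟨fun h y hy => ?_, fun h t ht => h _ (by omega)⟩
  rcases le_or_gt s y with hsy | hsy
  · simpa [show s + (y - s) = y by omega] using h (y - s) (by omega)
  · have := h (y + (n + 1) - s) (by omega)
    rw [show s + (y + (n + 1) - s) = y + (n + 1) by omega, hper y] at this
    omega

theorem cycle_lemma {n k : ℕ} (hstep : ∀ x, f x - 1 ≤ f (x + 1))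
    (hper : ∀ x, f (x + (n + 1)) = f x - k) :
    #{s ∈ range (n + 1) | ∀ t ≤ n, f (s + (n + 1)) < f (s + t)} = k := by
  -- The good shifts are the steps of the second turn at which the prefix minimum drops
  -- (by exactly one); over a whole turn it drops by `k`.
  zify
  rw [natCast_card_filter]
  calc ∑ s ∈ range (n + 1), (if ∀ t ≤ n, f (s + (n + 1)) < f (s + t) then 1 else 0 : ℤ)
      = ∑ s ∈ range (n + 1), (prefixMin f (n + s) - prefixMin f (n + (s + 1))) := by
        refine sum_congr rfl fun s hs => ?_
        rw [show n + (s + 1) = s + n + 1 by omega, show n + s = s + n by omega,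
          prefixMin_sub_prefixMin_succ hstep]
        exact if_congr (forall_lt_shift_iff_lt_prefixMin hper (Nat.lt_succ_iff.1 (mem_range.1 hs)))
          rfl rfl
    _ = k := by
        rw [sum_range_sub' (fun s => prefixMin f (n + s)), add_zero, prefixMin_add_period hper]
        ring

end CycleLemma

section Criterion

variable {m : ℕ}

/-- Preferences are `0`-based: car `i` prefers spot `b i` among `0, …, n - 1`. The condition says
that for every `t`, at most `n - t` cars prefer one of the last `n - t` spots. -/
def IsParkingFunction (n : ℕ) (b : Fin m → ℕ) : Prop :=
  ∀ t ≤ n, #{i | t ≤ b i} + t ≤ n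

instance (n : ℕ) (b : Fin m → ℕ) : Decidable (IsParkingFunction n b) :=
  inferInstanceAs (Decidable (∀ t ≤ n, _))

lemma IsParkingFunction.lt {n : ℕ} {b : Fin m → ℕ} (hb : IsParkingFunction n b) (i : Fin m) :
    b i < n := by
  by_contra! hi
  have := hb n le_rfl
  have : 0 < #{j | n ≤ b j} := card_pos.2 ⟨i, mem_filter.2 ⟨mem_univ i, hi⟩⟩
  omega

lemma card_filter_comp_perm (σ : Equiv.Perm (Fin m)) (p : Fin m → Prop) [DecidablePred p] :
    #{i | p (σ i)} = #{i | p i} := by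
  simp only [card_filter]
  exact Equiv.sum_comp σ fun i => if p i then 1 else 0

lemma card_le_of_forall_le_val {s : Finset (Fin m)} {c : ℕ} (h : ∀ i ∈ s, c ≤ (i : ℕ)) :
    #s ≤ m - c := by
  rw [← Nat.card_Ico c m]
  exact card_le_card_of_injOn (fun i => (i : ℕ)) (fun i hi => mem_Ico.2 ⟨h i hi, i.isLt⟩)
    Fin.val_injective.injOn

lemma isParkingFunction_of_bound {n : ℕ} (hmn : m ≤ n) (a : Fin m → ℕ)
    (σ : Equiv.Perm (Fin m)) (ha : ∀ i : Fin m, a (σ i) + 1 ≤ n - m + ((i : ℕ) + 1)) :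
    IsParkingFunction n a := by
  intro t ht
  rw [← card_filter_comp_perm σ]
  have := card_le_of_forall_le_val (s := {i | t ≤ a (σ i)}) (c := t + m - n) fun i hi => by
    have := ha i
    have := (mem_filter.1 hi).2
    omega
  omega

lemma IsParkingFunction.bound_of_monotone {n : ℕ} {a : Fin m → ℕ} (ha : IsParkingFunction n a)
    {σ : Equiv.Perm (Fin m)} (hσ : Monotone (a ∘ σ)) (i : Fin m) :
    a (σ i) + 1 ≤ n - m + ((i : ℕ) + 1) := by
  by_contra! hi
  set t := n - m + ((i : ℕ) + 1)
  have hti : t ≤ a (σ i) := by omega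
  have hlarge : Ici i ⊆ ({j | t ≤ a (σ j)} : Finset (Fin m)) := fun j hj =>
    mem_filter.2 ⟨mem_univ j, hti.trans (hσ (mem_Ici.1 hj))⟩
  have := card_le_card hlarge
  rw [Fin.card_Ici, card_filter_comp_perm σ (fun j => t ≤ a j)] at this
  have := ha t (hti.trans (ha.lt _).le)
  omega

lemma exists_sorted_iff_isParkingFunction {n : ℕ} (hmn : m ≤ n) (a : Fin m → Fin n) :
    (∃ σ : Equiv.Perm (Fin m), Monotone (fun i => a (σ i)) ∧
        ∀ i : Fin m, (a (σ i) : ℕ) + 1 ≤ n - m + ((i : ℕ) + 1)) ↔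
      IsParkingFunction n (fun i => (a i : ℕ)) :=
  ⟨fun ⟨σ, _, hσ⟩ => isParkingFunction_of_bound hmn _ σ hσ, fun ha =>
    ⟨Tuple.sort a, Tuple.monotone_sort a,
      ha.bound_of_monotone (Fin.val_strictMono.monotone.comp (Tuple.monotone_sort a))⟩⟩

end Criterion

section Circle

variable {m n : ℕ} (g : Fin m → ZMod (n + 1))

lemma val_eq_iff_eq_natCast {N : ℕ} [NeZero N] (z : ZMod N) {t : ℕ} (ht : t < N) :
    z.val = t ↔ z = t :=
  ⟨fun h => by rw [← h, ZMod.natCast_zmod_val], fun h => by rw [h, ZMod.val_cast_of_lt ht]⟩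

lemma card_filter_lt_succ (v : Fin m → ℕ) (t : ℕ) :
    #{i | v i < t + 1} = #{i | v i < t} + #{i | v i = t} := by
  rw [← card_union_of_disjoint (disjoint_filter.2 fun i _ h => h.ne), ← filter_or]
  simp only [Nat.lt_succ_iff_lt_or_eq]

def arrivals (x : ℕ) : ℕ := ∑ c ∈ range x, #{i | g i = c}

lemma arrivals_add (s : ℕ) {t : ℕ} (ht : t ≤ n + 1) :
    arrivals g (s + t) = arrivals g s + #{i | (g i - s).val < t} := by
  induction t with
  | zero => simp
  | succ t ih =>
    rw [← add_assoc, arrivals, sum_range_succ, ← arrivals, ih (by omega),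
      card_filter_lt_succ (fun i => (g i - s).val), add_assoc]
    simp only [fun z : ZMod (n + 1) => val_eq_iff_eq_natCast z (show t < n + 1 by omega),
      sub_eq_iff_eq_add', Nat.cast_add]

def walk (x : ℕ) : ℤ := arrivals g x - x

lemma walk_sub_one_le (x : ℕ) : walk g x - 1 ≤ walk g (x + 1) := by
  have := arrivals_add g x (t := 1) (by omega)
  simp only [walk]
  push_cast
  omega

lemma arrivals_add_period (x : ℕ) : arrivals g (x + (n + 1)) = arrivals g x + m := by
  have hval (z : ZMod (n + 1)) : z.val < n + 1 := z.val_lt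
  simpa [hval] using arrivals_add g x (t := n + 1) le_rfl

lemma walk_add_period (hmn : m ≤ n + 1) (x : ℕ) :
    walk g (x + (n + 1)) = walk g x - (n + 1 - m : ℕ) := by
  simp only [walk, arrivals_add_period]
  push_cast [hmn]
  ring

lemma isParkingFunction_sub_iff (s : ℕ) :
    IsParkingFunction n (fun i => (g i - s).val) ↔
      ∀ t ≤ n, walk g (s + (n + 1)) < walk g (s + t) := by
  refine forall₂_congr fun t ht => ?_
  have hwindow := arrivals_add g s (t := t) (by omega)
  have hperiod := arrivals_add_period g s
  have hsplit := card_filter_add_card_filter_not (s := univ) (p := fun i => t ≤ (g i - s).val)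
  simp only [not_le, card_univ, Fintype.card_fin] at hsplit
  simp only [walk]
  push_cast
  omega

lemma card_filter_zmod_eq_card_filter_range (p : ZMod (n + 1) → Prop) [DecidablePred p] :
    #{s : ZMod (n + 1) | p s} = #{s ∈ range (n + 1) | p ((s : ℕ) : ZMod (n + 1))} := by
  rw [card_filter, card_filter, ← Fin.sum_univ_eq_sum_range (fun s => if p s then 1 else 0)]
  exact sum_congr rfl fun i _ => by
    conv_lhs => rw [← ZMod.natCast_zmod_val i]
    rfl

lemma card_isParkingFunction_sub (hmn : m ≤ n) :
    #{s : ZMod (n + 1) | IsParkingFunction n (fun i => (g i - s).val)} = n + 1 - m := by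
  rw [card_filter_zmod_eq_card_filter_range]
  simp only [isParkingFunction_sub_iff]
  exact cycle_lemma (walk_sub_one_le g) (walk_add_period g (by omega))

end Circle

section Pollak

variable {m n : ℕ}

def pollakEquiv :
    {a : Fin m → Fin n // IsParkingFunction n (fun i => (a i : ℕ))} × ZMod (n + 1) ≃
      {p : (Fin m → ZMod (n + 1)) × ZMod (n + 1) //
        IsParkingFunction n (fun i => (p.1 i - p.2).val)} where
  toFun q := ⟨(fun i => ((q.1.1 i : ℕ) : ZMod (n + 1)) + q.2, q.2), by
    simpa [ZMod.val_cast_of_lt (Nat.lt_succ_of_lt (q.1.1 _).isLt)] using q.1.2⟩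
  invFun p := (⟨fun i => ⟨(p.1.1 i - p.1.2).val, p.2.lt i⟩, p.2⟩, p.1.2)
  left_inv q := by
    ext i
    · simp [ZMod.val_cast_of_lt (Nat.lt_succ_of_lt (q.1.1 _).isLt)]
    · rfl
  right_inv p := by
    ext i
    · simp
    · rfl

lemma card_pairs_isParkingFunction_sub (hmn : m ≤ n) :
    Nat.card {p : (Fin m → ZMod (n + 1)) × ZMod (n + 1) //
      IsParkingFunction n (fun i => (p.1 i - p.2).val)} = (n + 1) ^ m * (n + 1 - m) := by
  rw [Nat.card_congr (Equiv.subtypeProdEquivSigmaSubtype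
    fun (g : Fin m → ZMod (n + 1)) s => IsParkingFunction n fun i => (g i - s).val),
    Nat.card_sigma]
  simp only [Nat.card_eq_fintype_card, Fintype.card_subtype, card_isParkingFunction_sub _ hmn,
    sum_const, card_univ, smul_eq_mul, Fintype.card_fun, ZMod.card, Fintype.card_fin]

theorem card_isParkingFunction (hm : 1 ≤ m) (hmn : m ≤ n) :
    Nat.card {a : Fin m → Fin n // IsParkingFunction n (fun i => (a i : ℕ))} =
      (n - m + 1) * (n + 1) ^ (m - 1) := by
  have h := Nat.card_congr (pollakEquiv (m := m) (n := n))
  rw [Nat.card_prod, Nat.card_zmod, card_pairs_isParkingFunction_sub hmn] at h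
  obtain ⟨k, rfl⟩ : ∃ k, m = k + 1 := ⟨m - 1, by omega⟩
  refine Nat.eq_of_mul_eq_mul_right (show 0 < n + 1 by omega) ?_
  rw [h, pow_succ, Nat.add_sub_cancel, show n + 1 - (k + 1) = n - (k + 1) + 1 by omega]
  ring

end Pollak

end ParkingFunction

/-- For integers `1 ≤ m ≤ n`, the number of `(m,n)`-parking functions equals
`(n-m+1)·(n+1)^(m-1)`. Tuples `a : Fin m → Fin n` encode preference lists in `{1,…,n}^m`
via `i ↦ (a i : ℕ) + 1`; the condition says that some rearrangement of the tuple is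
nondecreasing and its `i`-th entry (1-indexed value) is at most `n - m + i`. -/
theorem parking_function_count (m n : ℕ) (hm : 1 ≤ m) (hmn : m ≤ n) :
    Nat.card {a : Fin m → Fin n //
      ∃ σ : Equiv.Perm (Fin m),
        Monotone (fun i => a (σ i)) ∧
        ∀ i : Fin m, (a (σ i) : ℕ) + 1 ≤ n - m + ((i : ℕ) + 1)} =
      (n - m + 1) * (n + 1) ^ (m - 1) := by
  rw [Nat.card_congr (Equiv.subtypeEquivRight
    (ParkingFunction.exists_sorted_iff_isParkingFunction hmn))]
  exact ParkingFunction.card_isParkingFunction hm hmn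
end

section
/- Abel's multinomial identity, first special instance: for every m ≥ 1, every n ≥ 0, and all positive reals x_1,…,x_m, one has A_n(x_1,…,x_m; −1,…,−1) = (x_1⋯x_m)^{-1}·(x_1+⋯+x_m)·(x_1+⋯+x_m+n)^{n-1}, i.e. Σ_{(s_1,…,s_m): s_1+⋯+s_m=n} (n!/(s_1!⋯s_m!))·∏_{j=1}^m (x_j+s_j)^{s_j-1} = (x_1⋯x_m)^{-1}·(x_1+⋯+x_m)·(x_1+⋯+x_m+n)^{n-1}. -/
/-!
Induction on `m`: splitting off the first coordinate writes `A_n` in `m + 1` variables as a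
binomial convolution of `(x₀ + k)^(k-1)` with `A_l` in the remaining `m` variables, so everything
reduces to Abel's binomial identity
`∑_{k+l=n} C(n,k) (x+k)^(k-1) (y+l)^(l-1) = (x⁻¹ + y⁻¹) (x+y+n)^(n-1)`.
Multiplying by `x + y + n = (x + k) + (y + l)` reduces that in turn to
`∑_{k+l=n} C(n,k) (x+k)^(k-1) (y+l)^l = x⁻¹ (x+y+n)^n`, proved by induction on `n`: as
functions of `y` both sides satisfy `f_{n+1}' y = (n+1) f_n (y+1)`, and they agree at
`y = -(x+n+1)`, where the left side becomes an `(n+1)`-st finite difference of a polynomial of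
degree `n`.
-/

/-- The Abel sum `A_n(x_1,…,x_m; p_1,…,p_m)`: the sum over tuples `s` of nonnegative
integers with `s_1 + ⋯ + s_m = n` of the multinomial coefficient `n!/(s_1!⋯s_m!)`
times `∏_j (x_j + s_j)^(s_j + p_j)`, powers taken in `ℝ` (`zpow`). -/
noncomputable def abelA (m n : ℕ) (x : Fin m → ℝ) (p : Fin m → ℤ) : ℝ :=
  ∑ s ∈ Finset.Nat.antidiagonalTuple m n,
    (Nat.multinomial Finset.univ s : ℝ) * ∏ j, (x j + s j) ^ ((s j : ℤ) + p j)

open Finset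

theorem Finset.Nat.sum_antidiagonalTuple_succ {M : Type*} [AddCommMonoid M] (m n : ℕ)
    (f : (Fin (m + 1) → ℕ) → M) :
    ∑ s ∈ antidiagonalTuple (m + 1) n, f s =
      ∑ p ∈ antidiagonal n, ∑ t ∈ antidiagonalTuple m p.2, f (Fin.cons p.1 t) := by
  have h : ∀ k n, antidiagonalTuple k n = finAntidiagonal k n := fun k n => by
    ext; simp [mem_antidiagonalTuple]
  simp_rw [h]
  rw [finAntidiagonal, finAntidiagonal.aux, sum_disjiUnion]
  simp [finAntidiagonal]

theorem Nat.multinomial_univ_fin_succ {m : ℕ} (s : Fin (m + 1) → ℕ) :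
    Nat.multinomial univ s =
      (s 0 + ∑ i : Fin m, s i.succ).choose (s 0) * Nat.multinomial univ (Fin.tail s) := by
  rw [Fin.univ_succ, Nat.multinomial_cons, sum_map]
  congr 1
  simp only [Nat.multinomial, sum_map, prod_map]
  rfl

theorem abelA_one (n : ℕ) (x : Fin 1 → ℝ) (p : Fin 1 → ℤ) :
    abelA 1 n x p = (x 0 + n) ^ ((n : ℤ) + p 0) := by
  simp [abelA]

theorem abelA_succ (m n : ℕ) (x : Fin (m + 1) → ℝ) (p : Fin (m + 1) → ℤ) :
    abelA (m + 1) n x p = ∑ q ∈ antidiagonal n,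
      (n.choose q.1 : ℝ) * (x 0 + q.1) ^ ((q.1 : ℤ) + p 0) *
        abelA m q.2 (fun j => x j.succ) (fun j => p j.succ) := by
  rw [abelA, Nat.sum_antidiagonalTuple_succ]
  refine sum_congr rfl fun q hq => ?_
  rw [abelA, mul_sum]
  refine sum_congr rfl fun t ht => ?_
  rw [Nat.multinomial_univ_fin_succ, Fin.prod_univ_succ]
  simp [Nat.mem_antidiagonalTuple.1 ht, mem_antidiagonal.1 hq]
  ring

theorem sum_antidiagonal_neg_one_pow_mul_choose_mul_pow_eq_zero {R : Type*} [CommRing R]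
    (x : R) {j n : ℕ} (h : j < n) :
    ∑ p ∈ antidiagonal n, (-1 : R) ^ p.2 * n.choose p.1 * (x + p.1) ^ j = 0 := by
  have := fwdDiff_iter_eq_sum_shift (1 : R) (fun r => r ^ j) n x
  rw [fwdDiff_iter_pow_eq_zero_of_lt h] at this
  rw [Nat.sum_antidiagonal_eq_sum_range_succ (fun k l => (-1 : R) ^ l * n.choose k * (x + k) ^ j)]
  simpa [zsmul_eq_mul, mul_assoc] using this.symm

theorem hasDerivAt_sum_antidiagonal_choose_mul_pow (c : ℕ → ℝ) (n : ℕ) (y : ℝ) :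
    HasDerivAt
      (fun y => ∑ p ∈ antidiagonal (n + 1),
        ((n + 1).choose p.1 : ℝ) * c p.1 * (y + p.2) ^ p.2)
      ((n + 1) * ∑ p ∈ antidiagonal n,
        (n.choose p.1 : ℝ) * c p.1 * (y + 1 + p.2) ^ p.2) y := by
  have hterm (p : ℕ × ℕ) :
      HasDerivAt (fun y => ((n + 1).choose p.1 : ℝ) * c p.1 * (y + p.2) ^ p.2)
        (((n + 1).choose p.1 : ℝ) * c p.1 * (p.2 * (y + p.2) ^ (p.2 - 1))) y := by
    simpa using (((hasDerivAt_id y).add_const (p.2 : ℝ)).pow p.2).const_mul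
      (((n + 1).choose p.1 : ℝ) * c p.1)
  refine (HasDerivAt.fun_sum fun p _ => hterm p).congr_deriv ?_
  rw [Nat.sum_antidiagonal_succ', mul_sum]
  simp only [Nat.cast_zero, zero_mul, mul_zero, zero_add]
  refine sum_congr rfl fun p hp => ?_
  have hchoose : ((n + 1).choose p.1 : ℝ) * (p.2 + 1 : ℕ) = (n + 1) * n.choose p.1 := by
    have := Nat.choose_mul_succ_eq n p.1
    rw [show n + 1 - p.1 = p.2 + 1 by rw [← mem_antidiagonal.1 hp]; omega] at this
    exact_mod_cast this.symm.trans (mul_comm _ _)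
  rw [Nat.add_sub_cancel, show y + ((p.2 + 1 : ℕ) : ℝ) = y + 1 + p.2 by push_cast; ring]
  linear_combination (c p.1 * (y + 1 + p.2) ^ p.2) * hchoose

theorem abel_binomial_neg_one_zero {x : ℝ} (hx : 0 < x) (n : ℕ) (y : ℝ) :
    ∑ p ∈ antidiagonal n,
        (n.choose p.1 : ℝ) * (x + p.1) ^ ((p.1 : ℤ) - 1) * (y + p.2) ^ p.2 =
      x⁻¹ * (x + y + n) ^ n := by
  induction n generalizing y with
  | zero => simp
  | succ n ih =>
    set L : ℝ → ℝ := fun y => ∑ p ∈ antidiagonal (n + 1),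
      ((n + 1).choose p.1 : ℝ) * (x + p.1) ^ ((p.1 : ℤ) - 1) * (y + p.2) ^ p.2
    -- At `y = -(x + n + 1)` each base `y + l` equals `-(x + k)`, leaving an alternating sum.
    have hroot : L (-(x + (n + 1))) = 0 := by
      rw [← sum_antidiagonal_neg_one_pow_mul_choose_mul_pow_eq_zero x (lt_add_one n)]
      refine sum_congr rfl fun p hp => ?_
      have hxk : x + p.1 ≠ 0 := by positivity
      have hsum : (p.1 : ℝ) + p.2 = n + 1 := by exact_mod_cast mem_antidiagonal.1 hp
      have hpow : (x + p.1) ^ p.1 * (x + p.1) ^ p.2 = (x + p.1) ^ n * (x + p.1) := by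
        rw [← pow_add, ← pow_succ, mem_antidiagonal.1 hp]
      rw [show -(x + (n + 1)) + p.2 = -(x + p.1) by linarith, neg_pow, zpow_natCast_sub_one₀ hxk]
      calc _ = (-1) ^ p.2 * ((n + 1).choose p.1 : ℝ) *
              ((x + p.1) ^ p.1 * (x + p.1) ^ p.2 / (x + p.1)) := by ring
        _ = _ := by rw [hpow, mul_div_cancel_right₀ _ hxk]
    have hderiv (y : ℝ) :
        HasDerivAt (fun y => L y - x⁻¹ * (x + y + (n + 1 : ℕ)) ^ (n + 1)) 0 y := by
      have hR : HasDerivAt (fun y => x⁻¹ * (x + y + (n + 1 : ℕ)) ^ (n + 1))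
          (x⁻¹ * ((n + 1) * (x + y + (n + 1 : ℕ)) ^ n)) y := by
        simpa using ((((hasDerivAt_id y).const_add x).add_const ((n + 1 : ℕ) : ℝ)).pow
          (n + 1)).const_mul x⁻¹
      refine ((hasDerivAt_sum_antidiagonal_choose_mul_pow (fun k : ℕ => (x + k) ^ ((k : ℤ) - 1))
        n y).sub hR).congr_deriv ?_
      rw [ih]
      push_cast
      ring
    have hconst := is_const_of_deriv_eq_zero (fun z => (hderiv z).differentiableAt)
      (fun z => (hderiv z).deriv) y (-(x + (n + 1)))
    rw [hroot] at hconst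
    push_cast at hconst ⊢
    rw [show x + -(x + (n + 1)) + (n + 1) = 0 by ring, zero_pow n.succ_ne_zero] at hconst
    linarith

theorem abel_binomial_neg_one_neg_one {x y : ℝ} (hx : 0 < x) (hy : 0 < y) (n : ℕ) :
    ∑ p ∈ antidiagonal n,
        (n.choose p.1 : ℝ) * (x + p.1) ^ ((p.1 : ℤ) - 1) * (y + p.2) ^ ((p.2 : ℤ) - 1) =
      (x⁻¹ + y⁻¹) * (x + y + n) ^ ((n : ℤ) - 1) := by
  have hs : x + y + n ≠ 0 := by positivity
  have hsplit : ∀ p ∈ antidiagonal n,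
      (x + y + n) *
          ((n.choose p.1 : ℝ) * (x + p.1) ^ ((p.1 : ℤ) - 1) * (y + p.2) ^ ((p.2 : ℤ) - 1)) =
        (n.choose p.1 : ℝ) * (x + p.1) ^ ((p.1 : ℤ) - 1) * (y + p.2) ^ p.2 +
          (n.choose p.2 : ℝ) * (y + p.2) ^ ((p.2 : ℤ) - 1) * (x + p.1) ^ p.1 := by
    intro p hp
    have hxk : x + p.1 ≠ 0 := by positivity
    have hyl : y + p.2 ≠ 0 := by positivity
    have hsum : (n : ℝ) = p.1 + p.2 := by exact_mod_cast (mem_antidiagonal.1 hp).symm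
    rw [Nat.choose_symm_of_eq_add (mem_antidiagonal.1 hp).symm, zpow_natCast_sub_one₀ hxk,
      zpow_natCast_sub_one₀ hyl, hsum]
    field_simp
    ring
  have hswap : ∑ p ∈ antidiagonal n,
        (n.choose p.2 : ℝ) * (y + p.2) ^ ((p.2 : ℤ) - 1) * (x + p.1) ^ p.1 =
      y⁻¹ * (y + x + n) ^ n := by
    rw [← abel_binomial_neg_one_zero hy n x, ← Nat.sum_antidiagonal_swap]
    rfl
  apply mul_left_cancel₀ hs
  rw [mul_sum, sum_congr rfl hsplit, sum_add_distrib, abel_binomial_neg_one_zero hx, hswap,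
    zpow_natCast_sub_one₀ hs]
  field_simp
  ring

/-- Abel's multinomial identity, first special instance:
`A_n(x_1,…,x_m; −1,…,−1) = (x_1⋯x_m)⁻¹·(x_1+⋯+x_m)·(x_1+⋯+x_m+n)^(n-1)`. -/
theorem abel_multinomial_special_one (m n : ℕ) (hm : 1 ≤ m)
    (x : Fin m → ℝ) (hx : ∀ j, 0 < x j) :
    abelA m n x (fun _ => -1) =
      (∏ j, x j)⁻¹ * (∑ j, x j) * ((∑ j, x j) + n) ^ ((n : ℤ) - 1) := by
  induction m, hm using Nat.le_induction generalizing n with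
  | base =>
    rw [abelA_one, Fin.prod_univ_one, Fin.sum_univ_one, inv_mul_cancel₀ (hx 0).ne', one_mul,
      sub_eq_add_neg]
  | succ m hm ih =>
    set P := ∏ j : Fin m, x j.succ
    set X := ∑ j : Fin m, x j.succ
    have hX : 0 < X := sum_pos (fun j _ => hx j.succ) ⟨⟨0, hm⟩, mem_univ _⟩
    have hx0 : x 0 ≠ 0 := (hx 0).ne'
    have htail (k : ℕ) : abelA m k (fun j => x j.succ) (fun _ => -1) =
        P⁻¹ * X * (X + k) ^ ((k : ℤ) - 1) :=
      ih k _ fun j => hx j.succ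
    calc abelA (m + 1) n x (fun _ => -1)
        = P⁻¹ * X * ∑ q ∈ antidiagonal n, (n.choose q.1 : ℝ) *
            (x 0 + q.1) ^ ((q.1 : ℤ) - 1) * (X + q.2) ^ ((q.2 : ℤ) - 1) := by
          rw [abelA_succ, mul_sum]
          refine sum_congr rfl fun q _ => ?_
          rw [htail, ← sub_eq_add_neg]
          ring
      _ = (x 0 * P)⁻¹ * (x 0 + X) * ((x 0 + X) + n) ^ ((n : ℤ) - 1) := by
          rw [abel_binomial_neg_one_neg_one (hx 0) hX]
          field_simp
          ring
      _ = _ := by rw [Fin.prod_univ_succ, Fin.sum_univ_succ]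
end

section
/- For all integers 1 ≤ m ≤ n, the following identity of natural numbers holds: Σ_{s=0}^{m-1} C(m-1,s)·(n-s)^{m-1-s}·(s+1)^{s} = Σ_{s=0}^{m-1} C(m-1,s)·(n+1)^{s}·(m-1-s)!. Equivalently, over the reals, Σ_{s=0}^{m-1} C(m-1,s)·(n-s)^{m-1-s}·(s+1)^{s} = (m-1)!·Σ_{s=0}^{m-1} (n+1)^{s}/s!. -/
/-!
Both sides are values at `x = n` of families `P k x = Σ_t C(k,t) (x - c t)^(k-t) b t`: the left
side with `b t = (t+1)^t`, `c t = t`, the right side (after `s ↦ k - s`) with `b t = t!`,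
`c t = -1`. Expanding `(y + 1)^(k-t)` shows that every such family satisfies the Appell recurrence
`P k (x + 1) = Σ_i C(k,i) P i x`, so two of them that agree at `x = -1` for every `k` agree at
every `x = -1 + j`. At `x = -1` the right side is trivially `k!`, and the left side is
`Σ_t (-1)^(k-t) C(k,t) (t+1)^k`, the `k`-th forward difference of `x^k`, which is `k!` as well.
-/

open Finset Nat

variable {R : Type*}

theorem choose_mul_add_one_pow_eq_sum_Ico [CommSemiring R] {t k : ℕ} (htk : t ≤ k) (y : R) :
    (k.choose t : R) * (y + 1) ^ (k - t)
      = ∑ i ∈ Ico t (k + 1), (k.choose i * i.choose t : R) * y ^ (i - t) := by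
  rw [sum_Ico_eq_sum_range, add_pow, mul_sum, show k + 1 - t = k - t + 1 by omega]
  refine sum_congr rfl fun j _ => ?_
  have hchoose : k.choose (t + j) * (t + j).choose t = k.choose t * (k - t).choose j := by
    simpa using Nat.choose_mul (n := k) (Nat.le_add_right t j)
  rw [Nat.add_sub_cancel_left, one_pow, mul_one, ← Nat.cast_mul, hchoose, Nat.cast_mul]
  ring

def appellSum [CommRing R] (b c : ℕ → R) (k : ℕ) (x : R) : R :=
  ∑ t ∈ range (k + 1), k.choose t * (x - c t) ^ (k - t) * b t

section CommRing

variable [CommRing R] (b c : ℕ → R)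

theorem appellSum_add_one (k : ℕ) (x : R) :
    appellSum b c k (x + 1) = ∑ i ∈ range (k + 1), k.choose i * appellSum b c i x := by
  unfold appellSum
  calc ∑ t ∈ range (k + 1), k.choose t * (x + 1 - c t) ^ (k - t) * b t
      = ∑ t ∈ range (k + 1), ∑ i ∈ Ico t (k + 1),
          (k.choose i * i.choose t : R) * (x - c t) ^ (i - t) * b t := by
        refine sum_congr rfl fun t ht => ?_
        rw [add_sub_right_comm, choose_mul_add_one_pow_eq_sum_Ico (mem_range_succ_iff.mp ht),
          sum_mul]
    _ = ∑ i ∈ range (k + 1), ∑ t ∈ range (i + 1),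
          (k.choose i * i.choose t : R) * (x - c t) ^ (i - t) * b t :=
        sum_comm' fun t i => by simp only [mem_range, mem_Ico]; omega
    _ = _ := by simp_rw [mul_sum, mul_assoc]

theorem appellSum_eq_of_eq (b' c' : ℕ → R) {x₀ : R}
    (h : ∀ k, appellSum b c k x₀ = appellSum b' c' k x₀) (j k : ℕ) :
    appellSum b c k (x₀ + j) = appellSum b' c' k (x₀ + j) := by
  induction j generalizing k with
  | zero => simpa using h k
  | succ j ih => simp only [Nat.cast_succ, ← add_assoc, appellSum_add_one, ih]

theorem appellSum_add_one_pow_neg_one (k : ℕ) :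
    appellSum (fun t => ((t : R) + 1) ^ t) (fun t => t) k (-1) = k ! := by
  have hdiff := congr_fun (fwdDiff_iter_eq_factorial (R := R) (n := k)) 1
  rw [fwdDiff_iter_eq_sum_shift, Pi.natCast_apply] at hdiff
  rw [appellSum, ← hdiff]
  refine sum_congr rfl fun t ht => ?_
  have htk : t ≤ k := mem_range_succ_iff.mp ht
  have hpow : ((t : R) + 1) ^ (k - t) * (t + 1) ^ t = (1 + t) ^ k := by
    rw [← pow_add, Nat.sub_add_cancel htk, add_comm]
  rw [zsmul_eq_mul, nsmul_one, ← hpow, show (-1 : R) - t = -1 * (t + 1) by ring, mul_pow]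
  push_cast
  ring

theorem appellSum_factorial_neg_one (k : ℕ) :
    appellSum (fun t => (t ! : R)) (fun _ => -1) k (-1) = k ! := by
  rw [appellSum, sum_range_succ, sum_eq_zero fun t ht => ?_]
  · simp
  · rw [sub_self, zero_pow (Nat.sub_ne_zero_of_lt (mem_range.mp ht))]
    simp

theorem sum_choose_mul_pow_mul_factorial_eq_appellSum (k : ℕ) (x : R) :
    ∑ s ∈ range (k + 1), k.choose s * (x + 1) ^ s * ((k - s) ! : R)
      = appellSum (fun t => (t ! : R)) (fun _ => -1) k x := by
  rw [appellSum, ← sum_range_reflect]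
  refine sum_congr rfl fun s hs => ?_
  have hsk : s ≤ k := mem_range_succ_iff.mp hs
  rw [add_tsub_cancel_right, Nat.choose_symm hsk, Nat.sub_sub_self hsk, sub_neg_eq_add]

end CommRing

theorem sum_choose_mul_sub_pow_mul_add_one_pow [CommRing R] (k n : ℕ) :
    ∑ s ∈ range (k + 1), k.choose s * ((n : R) - s) ^ (k - s) * ((s : R) + 1) ^ s
      = ∑ s ∈ range (k + 1), k.choose s * ((n : R) + 1) ^ s * ((k - s) ! : R) := by
  have h := appellSum_eq_of_eq (fun t => ((t : R) + 1) ^ t) (fun t => t)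
    (fun t => (t ! : R)) (fun _ => -1)
    (fun k => by rw [appellSum_add_one_pow_neg_one, appellSum_factorial_neg_one]) (n + 1) k
  rw [Nat.cast_succ, show (-1 : R) + (n + 1) = n by ring] at h
  rw [sum_choose_mul_pow_mul_factorial_eq_appellSum]
  exact h

theorem sum_choose_mul_pow_mul_factorial_eq_factorial_mul [Field R] [CharZero R] (k : ℕ) (y : R) :
    ∑ s ∈ range (k + 1), k.choose s * y ^ s * ((k - s) ! : R)
      = k ! * ∑ s ∈ range (k + 1), y ^ s / s ! := by
  rw [mul_sum]
  refine sum_congr rfl fun s hs => ?_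
  have hsk : s ≤ k := mem_range_succ_iff.mp hs
  have hfac : ((k - s) ! : R) ≠ 0 := Nat.cast_ne_zero.mpr (factorial_ne_zero _)
  rw [Nat.cast_choose R hsk]
  field_simp

/-- For `1 ≤ m ≤ n`:
`Σ_{s=0}^{m-1} C(m-1,s)·(n-s)^(m-1-s)·(s+1)^s = Σ_{s=0}^{m-1} C(m-1,s)·(n+1)^s·(m-1-s)!`
as natural numbers, and equivalently, over the reals, the left-hand side equals
`(m-1)!·Σ_{s=0}^{m-1} (n+1)^s/s!`. -/
theorem abel_poisson_identity (m n : ℕ) (hm : 1 ≤ m) (hmn : m ≤ n) :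
    (∑ s ∈ Finset.range m, (m - 1).choose s * (n - s) ^ (m - 1 - s) * (s + 1) ^ s
      = ∑ s ∈ Finset.range m, (m - 1).choose s * (n + 1) ^ s * (m - 1 - s).factorial)
    ∧
    ((∑ s ∈ Finset.range m,
        ((m - 1).choose s : ℝ) * ((n : ℝ) - s) ^ (m - 1 - s) * ((s : ℝ) + 1) ^ s)
      = ((m - 1).factorial : ℝ) *
        ∑ s ∈ Finset.range m, ((n : ℝ) + 1) ^ s / (s.factorial : ℝ)) := by
  obtain ⟨k, rfl⟩ : ∃ k, m = k + 1 := ⟨m - 1, by omega⟩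
  rw [Nat.add_sub_cancel]
  refine ⟨Nat.cast_injective (R := ℤ) ?_, ?_⟩
  · push_cast
    rw [← sum_choose_mul_sub_pow_mul_add_one_pow]
    refine sum_congr rfl fun s hs => ?_
    rw [Nat.cast_sub (by have := mem_range.mp hs; omega)]
  · rw [sum_choose_mul_sub_pow_mul_add_one_pow, sum_choose_mul_pow_mul_factorial_eq_factorial_mul]
end

section
/- For all integers 1 ≤ m ≤ n, the following identity holds in ℝ: Σ_{s=0}^{m-1} C(m-1,s)·(n-s)^{m-s-2}·(s+1)^{s-1} = ((n-m+2)/(n-m+1))·(n+1)^{m-2}. -/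
/-!
The sum is a relative of Abel's identity
`∑ₛ C(k,s) (s+1)^(s-1) (z-s)^(k-s) = (z+1)^k`, which is proved by induction on `k`: the
derivative in `z` of the left side for `k + 1` is `(k + 1)` times the left side for `k`, and at
`z = -1` the left side is an alternating binomial sum of a polynomial of degree `k`, hence `0`.
With `N = m - 1` and `y = n - N`, writing `n - s = y + (N - s)` splits Abel's sum for `N` at `z = n`
into `y` times our sum plus `N` times Abel's sum for `N - 1`, so `y · S = (n+1)^N - N (n+1)^(N-1)`.
-/

open Finset fwdDiff

theorem sum_choose_succ_mul_sub {R : Type*} [CommSemiring R] (k : ℕ) (f : ℕ → R) :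
    ∑ s ∈ range (k + 2), ((k + 1).choose s : R) * ((k + 1 - s : ℕ) : R) * f s
      = (k + 1) * ∑ s ∈ range (k + 1), (k.choose s : R) * f s := by
  rw [sum_range_succ, Nat.sub_self, Nat.cast_zero, mul_zero, zero_mul, add_zero, mul_sum]
  refine sum_congr rfl fun s _ => ?_
  rw [← Nat.cast_mul, ← Nat.choose_mul_succ_eq]
  push_cast
  ring

theorem sum_neg_one_pow_mul_choose_mul_pow_eq_zero {R : Type*} [CommRing R] {j n : ℕ}
    (h : j < n) (y : R) :
    ∑ s ∈ range (n + 1), (-1 : R) ^ (n - s) * n.choose s * (y + s) ^ j = 0 := by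
  have := congrFun (fwdDiff_iter_pow_eq_zero_of_lt (R := R) h) y
  rw [fwdDiff_iter_eq_sum_shift] at this
  simpa [zsmul_eq_mul] using this

noncomputable def abelSum (k : ℕ) (z : ℝ) : ℝ :=
  ∑ s ∈ range (k + 1), (k.choose s : ℝ) * (((s : ℝ) + 1) ^ ((s : ℤ) - 1) * (z - s) ^ (k - s))

theorem hasDerivAt_abelSum (k : ℕ) (z : ℝ) :
    HasDerivAt (abelSum (k + 1)) ((k + 1) * abelSum k z) z := by
  have h := HasDerivAt.fun_sum (u := range (k + 2)) fun s _ =>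
    ((((hasDerivAt_id' z).sub_const (s : ℝ)).pow (k + 1 - s)).const_mul
      (((s : ℝ) + 1) ^ ((s : ℤ) - 1))).const_mul ((k + 1).choose s : ℝ)
  rw [abelSum, ← sum_choose_succ_mul_sub]
  refine h.congr_deriv (sum_congr rfl fun s _ => ?_)
  rw [show k + 1 - s - 1 = k - s by omega]
  ring

/-- At `z = -1` the sum is the `(k + 1)`-st forward difference of the degree-`k` polynomial
`(x + 1) ^ k`. -/
theorem abelSum_succ_neg_one (k : ℕ) : abelSum (k + 1) (-1) = 0 := by
  rw [abelSum, ← sum_neg_one_pow_mul_choose_mul_pow_eq_zero (Nat.lt_succ_self k) (1 : ℝ)]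
  refine sum_congr rfl fun s hs_mem => ?_
  have hs : s ≤ k + 1 := Nat.lt_succ_iff.mp (mem_range.mp hs_mem)
  have h0 : (s : ℝ) + 1 ≠ 0 := by positivity
  have hpow : ((s : ℝ) + 1) ^ ((s : ℤ) - 1) * ((s : ℝ) + 1) ^ (k + 1 - s) = ((s : ℝ) + 1) ^ k := by
    rw [← zpow_natCast, ← zpow_add₀ h0, ← zpow_natCast]
    congr 1
    omega
  rw [show (-1 : ℝ) - s = -1 * ((s : ℝ) + 1) by ring, mul_pow, add_comm (1 : ℝ)]
  linear_combination ((-1 : ℝ) ^ (k + 1 - s) * (k + 1).choose s) * hpow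

theorem abelSum_eq (k : ℕ) (z : ℝ) : abelSum k z = (z + 1) ^ k := by
  induction k generalizing z with
  | zero => simp [abelSum]
  | succ k ih =>
    have hderiv : ∀ x, HasDerivAt (fun x => abelSum (k + 1) x - (x + 1) ^ (k + 1)) 0 x := by
      intro x
      have := (hasDerivAt_abelSum k x).sub (((hasDerivAt_id' x).add_const 1).pow (k + 1))
      rwa [ih, Nat.add_sub_cancel, mul_one, Nat.cast_succ, sub_self] at this
    have := is_const_of_deriv_eq_zero (fun x => (hderiv x).differentiableAt)
      (fun x => (hderiv x).deriv) z (-1)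
    simpa [abelSum_succ_neg_one, sub_eq_zero] using this

theorem sub_mul_sum_choose_mul_zpow (k : ℕ) {n : ℝ} (hn : (k : ℝ) + 1 < n) :
    (n - (k + 1)) * ∑ s ∈ range (k + 2),
        ((k + 1).choose s : ℝ) * (n - s) ^ ((k : ℤ) - s) * ((s : ℝ) + 1) ^ ((s : ℤ) - 1)
      = (n - k) * (n + 1) ^ k := by
  set f : ℕ → ℝ := fun s => ((s : ℝ) + 1) ^ ((s : ℤ) - 1) * (n - s) ^ ((k : ℤ) - s)
  have hk : abelSum k n = ∑ s ∈ range (k + 1), (k.choose s : ℝ) * f s := by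
    refine sum_congr rfl fun s hs => ?_
    rw [← zpow_natCast, Nat.cast_sub (Nat.lt_succ_iff.mp (mem_range.mp hs))]
  -- split `n - s = (n - (k + 1)) + (k + 1 - s)` off the power `(n - s) ^ (k + 1 - s)`
  have hk1 : abelSum (k + 1) n = (n - (k + 1)) * ∑ s ∈ range (k + 2),
        ((k + 1).choose s : ℝ) * (n - s) ^ ((k : ℤ) - s) * ((s : ℝ) + 1) ^ ((s : ℤ) - 1)
      + ∑ s ∈ range (k + 2), ((k + 1).choose s : ℝ) * ((k + 1 - s : ℕ) : ℝ) * f s := by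
    rw [abelSum, mul_sum, ← sum_add_distrib]
    refine sum_congr rfl fun s hs_mem => ?_
    have hs : s ≤ k + 1 := Nat.lt_succ_iff.mp (mem_range.mp hs_mem)
    have hns : n - s ≠ 0 := by
      have : (s : ℝ) ≤ k + 1 := by exact_mod_cast hs
      linarith
    rw [← zpow_natCast, Nat.cast_sub hs, Nat.cast_sub hs, Nat.cast_succ, Nat.cast_succ,
      show (k : ℤ) + 1 - s = (k - s) + 1 by ring, zpow_add_one₀ hns]
    ring
  rw [sum_choose_succ_mul_sub, ← hk, abelSum_eq, abelSum_eq] at hk1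
  linear_combination -hk1

/-- For `1 ≤ m ≤ n`, in `ℝ` (powers with possibly negative integer exponents are `zpow`):
`Σ_{s=0}^{m-1} C(m-1,s)·(n-s)^(m-s-2)·(s+1)^(s-1) = ((n-m+2)/(n-m+1))·(n+1)^(m-2)`. -/
theorem abel_sum_minus_one_minus_one (m n : ℕ) (hm : 1 ≤ m) (hmn : m ≤ n) :
    (∑ s ∈ Finset.range m,
        ((m - 1).choose s : ℝ) * ((n : ℝ) - s) ^ ((m : ℤ) - s - 2)
          * ((s : ℝ) + 1) ^ ((s : ℤ) - 1))
      = (((n : ℝ) - m + 2) / ((n : ℝ) - m + 1)) * ((n : ℝ) + 1) ^ ((m : ℤ) - 2) := by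
  obtain _ | _ | k := m
  · omega
  · have hn : (n : ℝ) ≠ 0 := Nat.cast_ne_zero.mpr (by omega)
    norm_num
    field_simp
    ring
  · have hn : (k : ℝ) + 1 < n := by exact_mod_cast hmn
    have key := sub_mul_sum_choose_mul_zpow k hn
    simp only [Nat.add_sub_cancel]
    push_cast
    simp only [show ∀ s : ℤ, (k : ℤ) + 1 + 1 - s - 2 = k - s by intro; ring,
      show (k : ℤ) + 1 + 1 - 2 = k by ring, zpow_natCast]
    have hy : (n : ℝ) - (k + 1 + 1) + 1 ≠ 0 := by linarith
    rw [div_mul_eq_mul_div, eq_div_iff hy]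
    linear_combination key
end

section
/- For all integers 1 ≤ m ≤ n, the following identity holds in ℝ: Σ_{s=0}^{m-1} C(m-1,s)·(n-s)^{m-s-2}·(s+1)^{s} = (n+1)^{m-1}/(n-m+1). -/
/-! After reindexing `s ↦ m - 1 - s` and setting `x = n - m + 1`, `x` times the sum is Abel's
identity `∑ₖ C(N,k) x (x+k)^(k-1) (y-k)^(N-k) = (x+y)^N` at `N = m - 1`, `y = m`.
To prove Abel's identity, write `y - k = (x + y) - (x + k)` and expand binomially: the
coefficient of `(x+y)^j` is `x` times an `(N-j)`-th finite difference of `k ↦ (x+k)^(N-j-1)`,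
a polynomial of degree below `N - j`, so it vanishes unless `j = N`. -/

open Finset

section CommRing

variable {R : Type*} [CommRing R]

theorem sum_range_choose_mul_pow_eq_zero {j N : ℕ} (h : j < N) (x : R) :
    ∑ k ∈ range (N + 1), (-1 : R) ^ (N - k) * N.choose k * (x + k) ^ j = 0 := by
  have := congr_fun (fwdDiff_iter_pow_eq_zero_of_lt (R := R) h) x
  rw [fwdDiff_iter_eq_sum_shift] at this
  simpa using this

theorem Nat.choose_mul_choose_sub_comm (n k j : ℕ) :
    n.choose k * (n - k).choose j = n.choose j * (n - j).choose k := by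
  have hk := Nat.choose_mul (n := n) (Nat.le_add_right k j)
  have hj := Nat.choose_mul (n := n) (Nat.le_add_left j k)
  rw [Nat.add_sub_cancel_left, Nat.choose_symm_add] at hk
  rw [Nat.add_sub_cancel] at hj
  exact hk.symm.trans hj

theorem sum_choose_mul_add_pow (n : ℕ) (a b : ℕ → R) (u : R) :
    ∑ k ∈ range (n + 1), n.choose k * a k * (u + b k) ^ (n - k) =
      ∑ j ∈ range (n + 1), n.choose j * u ^ j *
        ∑ k ∈ range (n - j + 1), (n - j).choose k * a k * b k ^ (n - j - k) := by
  simp_rw [add_pow, mul_sum]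
  refine (sum_comm' fun k j => ?_).trans
    (sum_congr rfl fun j hj => sum_congr rfl fun k hk => ?_)
  · simp only [mem_range]; omega
  · simp only [mem_range] at hj hk
    rw [Nat.sub_right_comm]
    have := congr(((($(Nat.choose_mul_choose_sub_comm n k j)) : ℕ) : R))
    push_cast at this
    linear_combination (a k * u ^ j * b k ^ (n - j - k)) * this

/-- `x (x + k)^(k - 1)`, with the value `1` at `k = 0` that the formula has when `x` is a unit. -/
def abelPoly (x : R) : ℕ → R
  | 0 => 1
  | k + 1 => x * (x + (k + 1 : ℕ)) ^ k

theorem abelPoly_mul_neg_pow {N k : ℕ} (hN : N ≠ 0) (hk : k ≤ N) (x : R) :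
    abelPoly x k * (-(x + k)) ^ (N - k) = x * ((-1) ^ (N - k) * (x + k) ^ (N - 1)) := by
  rw [neg_pow]
  cases k with
  | zero =>
    obtain ⟨N, rfl⟩ := Nat.exists_eq_add_one_of_ne_zero hN
    simp only [abelPoly, Nat.cast_zero, add_zero, Nat.sub_zero, Nat.add_sub_cancel, pow_succ]
    ring
  | succ k =>
    rw [abelPoly, show N - 1 = k + (N - (k + 1)) by omega, pow_add]
    ring

theorem sum_choose_mul_abelPoly_mul_neg_pow_eq_zero {N : ℕ} (hN : N ≠ 0) (x : R) :
    ∑ k ∈ range (N + 1), N.choose k * abelPoly x k * (-(x + k)) ^ (N - k) = 0 := by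
  calc ∑ k ∈ range (N + 1), N.choose k * abelPoly x k * (-(x + k)) ^ (N - k)
      = x * ∑ k ∈ range (N + 1), (-1 : R) ^ (N - k) * N.choose k * (x + k) ^ (N - 1) := by
        rw [mul_sum]
        refine sum_congr rfl fun k hk => ?_
        rw [mul_assoc, abelPoly_mul_neg_pow hN (Nat.lt_succ_iff.mp (mem_range.mp hk))]
        ring
    _ = 0 := by
        rw [sum_range_choose_mul_pow_eq_zero (by omega), mul_zero]

theorem sum_choose_mul_abelPoly_mul_sub_pow (n : ℕ) (x y : R) :
    ∑ k ∈ range (n + 1), n.choose k * abelPoly x k * (y - k) ^ (n - k) = (x + y) ^ n := by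
  have hy : ∀ k : ℕ, y - k = (x + y) + -(x + k) := fun k => by ring
  simp_rw [hy, sum_choose_mul_add_pow]
  rw [sum_eq_single_of_mem n (self_mem_range_succ n) fun j hj hjn => ?_]
  · simp [abelPoly]
  · rw [sum_choose_mul_abelPoly_mul_neg_pow_eq_zero (by rw [mem_range] at hj; omega), mul_zero]

end CommRing

section Field

variable {K : Type*} [Field K]

theorem abelPoly_eq_mul_zpow {x : K} (hx : x ≠ 0) (k : ℕ) :
    abelPoly x k = x * (x + k) ^ ((k : ℤ) - 1) := by
  cases k with
  | zero => simp [abelPoly, hx]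
  | succ k => simp [abelPoly]

theorem sum_choose_mul_zpow_mul_sub_pow {x : K} (hx : x ≠ 0) (n : ℕ) (y : K) :
    ∑ k ∈ range (n + 1), n.choose k * (x + k) ^ ((k : ℤ) - 1) * (y - k) ^ (n - k) =
      (x + y) ^ n / x := by
  rw [eq_div_iff hx, ← sum_choose_mul_abelPoly_mul_sub_pow, sum_mul]
  refine sum_congr rfl fun k _ => ?_
  rw [abelPoly_eq_mul_zpow hx]
  ring

end Field

/-- For `1 ≤ m ≤ n`, in `ℝ` (powers with possibly negative integer exponents are `zpow`):
`Σ_{s=0}^{m-1} C(m-1,s)·(n-s)^(m-s-2)·(s+1)^s = (n+1)^(m-1)/(n-m+1)`. -/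
theorem abel_sum_minus_one_zero (m n : ℕ) (hm : 1 ≤ m) (hmn : m ≤ n) :
    (∑ s ∈ Finset.range m,
        ((m - 1).choose s : ℝ) * ((n : ℝ) - s) ^ ((m : ℤ) - s - 2) * ((s : ℝ) + 1) ^ s)
      = ((n : ℝ) + 1) ^ (m - 1) / ((n : ℝ) - m + 1) := by
  obtain ⟨M, rfl⟩ := Nat.exists_eq_add_of_le' hm
  have hx : (n : ℝ) - M ≠ 0 := by
    have : (M : ℝ) + 1 ≤ n := by exact_mod_cast hmn
    linarith
  rw [Nat.add_sub_cancel, ← sum_range_reflect]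
  convert sum_choose_mul_zpow_mul_sub_pow hx M ((M : ℝ) + 1) using 1
  · refine sum_congr rfl fun k hk => ?_
    have hkM : k ≤ M := Nat.lt_succ_iff.mp (mem_range.mp hk)
    have hbase : (n : ℝ) - ((M - k : ℕ) : ℝ) = (n - M) + k := by
      push_cast [Nat.cast_sub hkM]; ring
    have hexp : ((M + 1 : ℕ) : ℤ) - ((M - k : ℕ) : ℤ) - 2 = k - 1 := by omega
    have hsucc : ((M - k : ℕ) : ℝ) + 1 = (M + 1) - k := by
      push_cast [Nat.cast_sub hkM]; ring
    rw [Nat.add_sub_cancel, Nat.choose_symm hkM, hbase, hexp, hsucc]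
  · push_cast; ring
end

section
/- Fix c ∈ (0,1). There exist a constant C > 0 and N such that for every integer n ≥ N with m := cn a positive integer, one has | ((m-1)!/(n+1)^{m-1})·Σ_{s=0}^{m-1} (n+1)^{s}/s! − (1/(1−c))·(1 + (c^2−c−1)/(n(1−c)^2)) | ≤ C/n^2. -/
/-!
Reversing the order of summation turns the left-hand quantity into the falling-factorial sum
`∑_{j<m} (m-1)_j / λ^j` with `λ = n + 1`. Since `m - 1 - i = cλ - (c + 1 + i)`, the `j`-th term
is `c^j ∏_{i<j} (1 - x_i)` with `x_i = (c + 1 + i) / (cλ)`, and replacing the product by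
`1 - ∑_{i<j} x_i` costs at most `c^j (∑_{i<j} x_i)^2 / 2 = O(j^4 c^j / n^2)`, which is summable
in `j`. The linearised sum is a polynomial times a geometric sum and has a closed form: its value
at `m = ∞` is `1/(1-c) - (1+c-c^2)/(λ(1-c)^3)`, the claimed expansion up to `O(1/n^2)`, and the
remainder carries the factor `c^m = c^{cn}`, which is exponentially small.
-/

open Finset

theorem factorial_div_pow_mul_sum_range_pow_div_factorial {K : Type*} [Field K] [CharZero K]
    (N : ℕ) {x : K} (hx : x ≠ 0) :
    (N.factorial : K) / x ^ N * ∑ s ∈ range (N + 1), x ^ s / s.factorial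
      = ∑ j ∈ range (N + 1), (N.descFactorial j : K) / x ^ j := by
  rw [mul_sum, ← sum_range_reflect]
  refine sum_congr rfl fun j hj => ?_
  have hjN : j ≤ N := Nat.lt_succ_iff.mp (mem_range.mp hj)
  rw [Nat.add_sub_cancel, ← Nat.factorial_mul_descFactorial hjN,
    show x ^ N = x ^ (N - j) * x ^ j by rw [← pow_add, Nat.sub_add_cancel hjN]]
  have hfact : ((N - j).factorial : K) ≠ 0 := Nat.cast_ne_zero.2 (Nat.factorial_ne_zero _)
  push_cast
  field_simp

theorem abs_prod_one_sub_sub_one_sub_sum_le {ι K : Type*} [Field K] [LinearOrder K]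
    [IsStrictOrderedRing K] (s : Finset ι) {x : ι → K}
    (h0 : ∀ i ∈ s, 0 ≤ x i) (h1 : ∀ i ∈ s, x i ≤ 1) :
    |∏ i ∈ s, (1 - x i) - (1 - ∑ i ∈ s, x i)| ≤ (∑ i ∈ s, x i) ^ 2 / 2 := by
  classical
  induction s using Finset.induction_on with
  | empty => simp
  | insert a s ha ih =>
    simp only [mem_insert, forall_eq_or_imp] at h0 h1
    have hS : 0 ≤ ∑ i ∈ s, x i := sum_nonneg h0.2
    obtain ⟨lower, upper⟩ := abs_sub_le_iff.1 (ih h0.2 h1.2)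
    rw [prod_insert ha, sum_insert ha, abs_sub_le_iff]
    constructor
    · nlinarith [h0.1, h1.1]
    · nlinarith [h0.1, h1.1]

theorem sum_range_add_natCast {K : Type*} [Field K] [CharZero K] (a : K) (j : ℕ) :
    ∑ i ∈ range j, (a + i) = ((2 * a - 1) * j + j ^ 2) / 2 := by
  induction j with
  | zero => simp
  | succ j ih => rw [sum_range_succ, ih]; push_cast; ring

/-- `c^j (1 - ∑_{i<j} (c + 1 + i) / (c λ))`: the linearisation in `1/λ` of
`c^j ∏_{i<j} (1 - (c + 1 + i) / (c λ))`. -/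
noncomputable def firstOrderTerm (c lam : ℝ) (j : ℕ) : ℝ :=
  c ^ j * (1 - ((2 * c + 1) * j + j ^ 2) / (2 * c * lam))

noncomputable def firstOrderLimit (c lam : ℝ) : ℝ :=
  1 / (1 - c) - (1 + c - c ^ 2) / (lam * (1 - c) ^ 3)

noncomputable def firstOrderTail (c lam : ℝ) (m : ℕ) : ℝ :=
  c ^ m * (1 / (1 - c) - (2 * c * (1 + c - c ^ 2) + (1 - c) * (1 + 3 * c - 2 * c ^ 2) * m
    + (1 - c) ^ 2 * m ^ 2) / (2 * c * lam * (1 - c) ^ 3))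

section

variable {c lam : ℝ} {N : ℕ}

theorem descFactorial_div_pow_eq_pow_mul_prod (hc : c ≠ 0) (hlam : lam ≠ 0)
    (hN : (N : ℝ) + 1 + c = c * lam) (j : ℕ) :
    (N.descFactorial j : ℝ) / lam ^ j
      = c ^ j * ∏ i ∈ range j, (1 - (c + 1 + i) / (c * lam)) :=
  calc (N.descFactorial j : ℝ) / lam ^ j = ∏ i ∈ range j, ((N : ℝ) - i) / lam := by
        rw [← descPochhammer_eval_eq_descFactorial, descPochhammer_eval_eq_prod_range,
          prod_div_distrib, prod_const, card_range]
    _ = ∏ i ∈ range j, c * (1 - (c + 1 + i) / (c * lam)) :=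
        prod_congr rfl fun i _ => by field_simp; linarith
    _ = _ := by rw [prod_mul_distrib, prod_const, card_range]

theorem abs_descFactorial_div_pow_sub_firstOrderTerm_le (hc : 0 < c) (hc1 : c ≤ 1)
    (hlam : 0 < lam) (hN : (N : ℝ) + 1 + c = c * lam) {j : ℕ} (hj : j ≤ N) :
    |(N.descFactorial j : ℝ) / lam ^ j - firstOrderTerm c lam j|
      ≤ 2 * j ^ 4 * c ^ j / (c ^ 2 * lam ^ 2) := by
  rw [descFactorial_div_pow_eq_pow_mul_prod hc.ne' hlam.ne' hN]
  set x : ℕ → ℝ := fun i => (c + 1 + i) / (c * lam)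
  have hsum : ∑ i ∈ range j, x i = ((2 * c + 1) * j + j ^ 2) / (2 * c * lam) := by
    rw [← sum_div, sum_range_add_natCast]
    field_simp
    ring
  have hx0 : ∀ i ∈ range j, 0 ≤ x i := fun i _ => by positivity
  have hx1 : ∀ i ∈ range j, x i ≤ 1 := fun i hi => by
    have : (i : ℝ) + 1 ≤ N := by exact_mod_cast (mem_range.1 hi).trans_le hj
    rw [div_le_one (by positivity)]
    linarith
  have hS : ∑ i ∈ range j, x i ≤ 2 * j ^ 2 / (c * lam) := by
    have : (j : ℝ) ≤ j ^ 2 := by exact_mod_cast Nat.le_self_pow two_ne_zero j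
    calc ∑ i ∈ range j, x i ≤ 4 * j ^ 2 / (2 * c * lam) := by rw [hsum]; gcongr; nlinarith
      _ = 2 * j ^ 2 / (c * lam) := by field_simp; ring
  rw [firstOrderTerm, ← hsum, ← mul_sub, abs_mul, abs_of_pos (by positivity)]
  calc c ^ j * |∏ i ∈ range j, (1 - x i) - (1 - ∑ i ∈ range j, x i)|
      ≤ c ^ j * ((2 * j ^ 2 / (c * lam)) ^ 2 / 2) := by
        gcongr
        exact (abs_prod_one_sub_sub_one_sub_sum_le _ hx0 hx1).trans (by gcongr)
    _ = 2 * j ^ 4 * c ^ j / (c ^ 2 * lam ^ 2) := by ring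

theorem abs_sum_descFactorial_div_pow_sub_sum_firstOrderTerm_le (hc : 0 < c) (hc1 : c < 1)
    (hlam : 0 < lam) (hN : (N : ℝ) + 1 + c = c * lam) :
    |∑ j ∈ range (N + 1), (N.descFactorial j : ℝ) / lam ^ j
        - ∑ j ∈ range (N + 1), firstOrderTerm c lam j|
      ≤ 2 * (∑' j : ℕ, (j : ℝ) ^ 4 * c ^ j) / (c ^ 2 * lam ^ 2) := by
  have hsummable : Summable fun j : ℕ => (j : ℝ) ^ 4 * c ^ j :=
    summable_pow_mul_geometric_of_norm_lt_one 4 (by rwa [Real.norm_of_nonneg hc.le])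
  rw [← sum_sub_distrib]
  calc _ ≤ ∑ j ∈ range (N + 1), 2 * j ^ 4 * c ^ j / (c ^ 2 * lam ^ 2) :=
        (abs_sum_le_sum_abs _ _).trans <| sum_le_sum fun j hj =>
          abs_descFactorial_div_pow_sub_firstOrderTerm_le hc hc1.le hlam hN
            (Nat.lt_succ_iff.1 (mem_range.1 hj))
    _ = 2 * (∑ j ∈ range (N + 1), (j : ℝ) ^ 4 * c ^ j) / (c ^ 2 * lam ^ 2) := by
        rw [mul_sum, sum_div]
        simp_rw [mul_assoc]
    _ ≤ _ := by
        gcongr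
        exact hsummable.sum_le_tsum _ fun j _ => by positivity

theorem sum_range_firstOrderTerm (hc : c ≠ 0) (hc1 : c ≠ 1) (hlam : lam ≠ 0) (m : ℕ) :
    ∑ j ∈ range m, firstOrderTerm c lam j = firstOrderLimit c lam - firstOrderTail c lam m := by
  have h1c : 1 - c ≠ 0 := sub_ne_zero.2 hc1.symm
  induction m with
  | zero => rw [firstOrderLimit, firstOrderTail]; field_simp; ring
  | succ m ih =>
    rw [sum_range_succ, ih, firstOrderTerm, firstOrderLimit, firstOrderTail, firstOrderTail]
    push_cast
    field_simp
    ring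

theorem abs_firstOrderTail_le (hc : 0 < c) (hc1 : c < 1) (hlam : 1 ≤ lam) {m : ℕ}
    (hm : 1 ≤ m) :
    |firstOrderTail c lam m|
      ≤ (1 / (1 - c) + 7 / (2 * c * (1 - c) ^ 3)) * (∑' j : ℕ, (j : ℝ) ^ 4 * c ^ j)
        / m ^ 2 := by
  have hsummable : Summable fun j : ℕ => (j : ℝ) ^ 4 * c ^ j :=
    summable_pow_mul_geometric_of_norm_lt_one 4 (by rwa [Real.norm_of_nonneg hc.le])
  have h1c : 0 < 1 - c := sub_pos.2 hc1
  have hm1 : (1 : ℝ) ≤ m := by exact_mod_cast hm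
  have hpow : c ^ m * m ^ 2 ≤ (∑' j : ℕ, (j : ℝ) ^ 4 * c ^ j) / m ^ 2 := by
    rw [le_div_iff₀ (by positivity)]
    calc c ^ m * m ^ 2 * m ^ 2 = (m : ℝ) ^ 4 * c ^ m := by ring
      _ ≤ _ := hsummable.le_tsum m fun j _ => by positivity
  set q : ℝ :=
    2 * c * (1 + c - c ^ 2) + (1 - c) * (1 + 3 * c - 2 * c ^ 2) * m + (1 - c) ^ 2 * m ^ 2
  have hq0 : 0 ≤ q := by
    have : 0 ≤ 1 + 3 * c - 2 * c ^ 2 := by nlinarith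
    have : 0 ≤ 1 + c - c ^ 2 := by nlinarith
    positivity
  have hq : q ≤ 7 * m ^ 2 := by
    have : 2 * c * (1 + c - c ^ 2) ≤ 3 := by nlinarith
    have : (1 - c) * (1 + 3 * c - 2 * c ^ 2) ≤ 3 := by nlinarith
    have : (1 - c) ^ 2 ≤ 1 := by nlinarith
    nlinarith
  have hfactor : |1 / (1 - c) - q / (2 * c * lam * (1 - c) ^ 3)|
      ≤ (1 / (1 - c) + 7 / (2 * c * (1 - c) ^ 3)) * m ^ 2 := by
    have hm2 : (1 : ℝ) ≤ m ^ 2 := one_le_pow₀ hm1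
    calc _ ≤ 1 / (1 - c) + q / (2 * c * lam * (1 - c) ^ 3) := by
          have : 0 ≤ q / (2 * c * lam * (1 - c) ^ 3) := by positivity
          rw [abs_sub_le_iff]
          constructor <;> linarith [one_div_pos.2 h1c]
      _ ≤ m ^ 2 / (1 - c) + 7 * m ^ 2 / (2 * c * 1 * (1 - c) ^ 3) := by gcongr
      _ = _ := by ring
  rw [firstOrderTail, abs_mul, abs_of_pos (by positivity)]
  calc _ ≤ c ^ m * ((1 / (1 - c) + 7 / (2 * c * (1 - c) ^ 3)) * m ^ 2) := by gcongr
    _ = (1 / (1 - c) + 7 / (2 * c * (1 - c) ^ 3)) * (c ^ m * m ^ 2) := by ring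
    _ ≤ _ := by rw [mul_div_assoc]; gcongr

theorem abs_firstOrderLimit_sub_le (hc : 0 ≤ c) (hc1 : c < 1) {n : ℝ} (hn : 0 < n) :
    |firstOrderLimit c (n + 1) - 1 / (1 - c) * (1 + (c ^ 2 - c - 1) / (n * (1 - c) ^ 2))|
      ≤ 2 / ((1 - c) ^ 3 * n ^ 2) := by
  have h1c : 0 < 1 - c := sub_pos.2 hc1
  have hdiff :
      firstOrderLimit c (n + 1) - 1 / (1 - c) * (1 + (c ^ 2 - c - 1) / (n * (1 - c) ^ 2))
        = (1 + c - c ^ 2) / ((1 - c) ^ 3 * (n * (n + 1))) := by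
    rw [firstOrderLimit]
    field_simp
    ring
  rw [hdiff, abs_of_nonneg (div_nonneg (by nlinarith) (by positivity))]
  calc _ ≤ 2 / ((1 - c) ^ 3 * (n * (n + 1))) := by gcongr; nlinarith
    _ ≤ _ := by gcongr; nlinarith

end

/-- Fix `c ∈ (0,1)`. There are `C > 0` and `N` such that for every `n ≥ N` with
`m := cn` a positive integer,
`| ((m-1)!/(n+1)^(m-1))·Σ_{s=0}^{m-1} (n+1)^s/s! − (1/(1−c))·(1 + (c²−c−1)/(n(1−c)²)) | ≤ C/n²`. -/
theorem poisson_factor_asymptotics (c : ℝ) (hc : 0 < c) (hc1 : c < 1) :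
    ∃ C > 0, ∃ N : ℕ, ∀ n : ℕ, N ≤ n → ∀ m : ℕ, 1 ≤ m → (m : ℝ) = c * n →
      |((m - 1).factorial : ℝ) / ((n : ℝ) + 1) ^ (m - 1) *
            ∑ s ∈ Finset.range m, ((n : ℝ) + 1) ^ s / (s.factorial : ℝ)
          - 1 / (1 - c) * (1 + (c ^ 2 - c - 1) / ((n : ℝ) * (1 - c) ^ 2))|
        ≤ C / (n : ℝ) ^ 2 := by
  set J := ∑' j : ℕ, (j : ℝ) ^ 4 * c ^ j
  have hJ : 0 ≤ J := tsum_nonneg fun j => by positivity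
  have h1c : 0 < 1 - c := sub_pos.2 hc1
  set B := 1 / (1 - c) + 7 / (2 * c * (1 - c) ^ 3)
  refine ⟨(2 + B) * J / c ^ 2 + 2 / (1 - c) ^ 3, by positivity, 1, fun n hn m hm hmn => ?_⟩
  obtain ⟨N, rfl⟩ : ∃ N, m = N + 1 := ⟨m - 1, by omega⟩
  have hn0 : (0 : ℝ) < n := by exact_mod_cast hn
  have hN : (N : ℝ) + 1 + c = c * (n + 1) := by push_cast at hmn; linarith
  have hsum := sum_range_firstOrderTerm hc.ne' hc1.ne (by positivity : (n : ℝ) + 1 ≠ 0) (N + 1)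
  have hmain := abs_sum_descFactorial_div_pow_sub_sum_firstOrderTerm_le hc hc1 (by positivity) hN
  have htail :=
    abs_firstOrderTail_le hc hc1 (by linarith : 1 ≤ (n : ℝ) + 1) (Nat.le_add_left 1 N)
  have hlim := abs_firstOrderLimit_sub_le hc.le hc1 hn0
  rw [hmn] at htail
  rw [Nat.add_sub_cancel, factorial_div_pow_mul_sum_range_pow_div_factorial N (by positivity)]
  calc _ = |(∑ j ∈ range (N + 1), (N.descFactorial j : ℝ) / ((n : ℝ) + 1) ^ j
          - ∑ j ∈ range (N + 1), firstOrderTerm c (n + 1) j) + -firstOrderTail c (n + 1) (N + 1)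
          + (firstOrderLimit c (n + 1)
            - 1 / (1 - c) * (1 + (c ^ 2 - c - 1) / (n * (1 - c) ^ 2)))| := by
        rw [hsum]; congr 1; ring
    _ ≤ 2 * J / (c ^ 2 * n ^ 2) + B * J / (c * n) ^ 2 + 2 / ((1 - c) ^ 3 * n ^ 2) := by
        refine (abs_add_three _ _ _).trans (add_le_add_three (hmain.trans ?_) ?_ hlim)
        · gcongr; linarith
        · rwa [abs_neg]
    _ = ((2 + B) * J / c ^ 2 + 2 / (1 - c) ^ 3) / n ^ 2 := by field_simp
end
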